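/- arXiv:1509.02570 — 5 statements merged into one kernel-verified Lean document; each statement's English description precedes it below -/
import Mathlib

section
/- Let q, q_d ∈ ℝ³ with ‖q‖ = ‖q_d‖ = 1, and define the error function Ψ = 1 − q·q_d and the direction error e_q = q_d × q. Then (i) (1/2)‖e_q‖² ≤ Ψ, and (ii) for any constant 0 < ψ_q < 2, if Ψ < ψ_q then Ψ ≤ ‖e_q‖² / (2 − ψ_q). -/
/-!
For unit vectors Lagrange's identity gives `‖q_d × q‖² = 1 - (q·q_d)² = Ψ (2 - Ψ)`, and since
this is nonnegative, `0 ≤ Ψ ≤ 2`. Both bounds are then one-variable inequalities in `Ψ`: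
`Ψ (2 - Ψ) / 2 ≤ Ψ` always, and `Ψ < ψ_q` makes `2 - Ψ > 2 - ψ_q > 0`.
-/

noncomputable section

open scoped BigOperators

abbrev V3 : Type := Fin 3 → ℝ

def dot3 (a b : V3) : ℝ := ∑ i, a i * b i

def norm3 (a : V3) : ℝ := Real.sqrt (dot3 a a)

def cross3 (a b : V3) : V3 :=
  ![a 1 * b 2 - a 2 * b 1, a 2 * b 0 - a 0 * b 2, a 0 * b 1 - a 1 * b 0]

def e3 : V3 := ![0, 0, 1]

lemma dot3_comm (a b : V3) : dot3 a b = dot3 b a := by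
  simp only [dot3, mul_comm]

lemma dot3_self_nonneg (a : V3) : 0 ≤ dot3 a a :=
  Finset.sum_nonneg fun i _ => mul_self_nonneg (a i)

lemma norm3_sq (a : V3) : norm3 a ^ 2 = dot3 a a :=
  Real.sq_sqrt (dot3_self_nonneg a)

lemma dot3_cross3_self (a b : V3) :
    dot3 (cross3 a b) (cross3 a b) = dot3 a a * dot3 b b - dot3 a b ^ 2 := by
  simp only [dot3, cross3, Fin.sum_univ_three, Matrix.cons_val_zero, Matrix.cons_val_one,
    Matrix.cons_val_two, Matrix.head_cons, Matrix.tail_cons]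
  ring

lemma norm3_cross3_sq_of_norm3_eq_one {a b : V3} (ha : norm3 a = 1) (hb : norm3 b = 1) :
    norm3 (cross3 a b) ^ 2 = (1 - dot3 b a) * (2 - (1 - dot3 b a)) := by
  have ha' : dot3 a a = 1 := by rw [← norm3_sq, ha, one_pow]
  have hb' : dot3 b b = 1 := by rw [← norm3_sq, hb, one_pow]
  rw [norm3_sq, dot3_cross3_self, ha', hb', dot3_comm a b]
  ring

lemma one_sub_dot3_nonneg_of_norm3_eq_one {a b : V3} (ha : norm3 a = 1) (hb : norm3 b = 1) :
    0 ≤ 1 - dot3 b a := by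
  have hsq : 0 ≤ (1 - dot3 b a) * (2 - (1 - dot3 b a)) := by
    rw [← norm3_cross3_sq_of_norm3_eq_one ha hb]
    positivity
  nlinarith

lemma half_mul_two_sub_le (x : ℝ) : 1 / 2 * (x * (2 - x)) ≤ x := by
  nlinarith [sq_nonneg x]

lemma le_mul_two_sub_div {x ψ : ℝ} (hx : 0 ≤ x) (hxψ : x < ψ) (hψ : ψ < 2) :
    x ≤ x * (2 - x) / (2 - ψ) := by
  rw [le_div_iff₀ (by linarith)]
  exact mul_le_mul_of_nonneg_left (by linarith) hx

/-- bounds relating the error function `Ψ = 1 - q·q_d` and the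
direction error `e_q = q_d × q` for unit vectors on the two-sphere. -/
theorem error_function_bounds (q qd : V3) (hq : norm3 q = 1) (hqd : norm3 qd = 1) :
    (1 / 2) * norm3 (cross3 qd q) ^ 2 ≤ 1 - dot3 q qd ∧
      ∀ ψq : ℝ, 0 < ψq → ψq < 2 → 1 - dot3 q qd < ψq →
        1 - dot3 q qd ≤ norm3 (cross3 qd q) ^ 2 / (2 - ψq) := by
  rw [norm3_cross3_sq_of_norm3_eq_one hqd hq]
  exact ⟨half_mul_two_sub_le _, fun ψq _ hψ2 hlt =>
    le_mul_two_sub_div (one_sub_dot3_nonneg_of_norm3_eq_one hqd hq) hlt hψ2⟩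
end
end

section
/- Let q, q_d, ω, ω_d : ℝ → ℝ³ be differentiable with ‖q(t)‖ = ‖q_d(t)‖ = 1, q·ω = 0, q_d·ω_d = 0, q̇ = ω × q, and q̇_d = ω_d × q_d. Let α ∈ ℝ, β ≠ 0, k_q, k_ω > 0. Define e_q = q_d × q and e_ω = ω + q̂²ω_d, and let u ∈ ℝ³ (possibly time-dependent) be of the form u = u∥ + u⊥ where u∥ is parallel to q and u⊥ = −(1/β) q̂ { −k_q e_q − k_ω e_ω − (q·ω_d) q̇ − q̂² ω̇_d − α q̂ e₃ }. If ω̇ = α q × e₃ + β q × u, then ω̇ = −k_q e_q − k_ω e_ω − (q·ω_d) q̇ − q̂² ω̇_d. -/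
noncomputable section

open scoped BigOperators

/-!
Each term of the commanded acceleration `F = -k_q e_q - k_ω e_ω - (q·ω_d) q̇ - q̂² ω̇_d` is
orthogonal to `q` (this uses `q·ω = 0` and `q̇ = ω × q`), and so is `α q × e₃`. On the plane
orthogonal to the unit vector `q`, `-q̂²` is the identity, so `β q × u⊥ = -q̂²(F - α q × e₃)
= F - α q × e₃`, while `q × u∥ = 0`; substituting into `ω̇ = α q × e₃ + β q × u` leaves `F`.
-/

open Matrix

lemma cross3_eq_crossProduct (a b : V3) : cross3 a b = a ⨯₃ b := rfl

lemma dot3_eq_dotProduct (a b : V3) : dot3 a b = a ⬝ᵥ b := rfl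

lemma dot3_self_eq_one_of_norm3_eq_one {a : V3} (h : norm3 a = 1) : dot3 a a = 1 :=
  Real.sqrt_eq_one.mp h

section CrossProduct

variable {R : Type*} [CommRing R]

lemma cross_cross_self_eq_neg_of_dotProduct_eq_zero {q x : Fin 3 → R}
    (hq : q ⬝ᵥ q = 1) (hx : q ⬝ᵥ x = 0) : q ⨯₃ (q ⨯₃ x) = -x := by
  rw [cross_cross_eq_smul_sub_smul', hx, hq, zero_smul, one_smul, zero_sub]

lemma smul_cross_add_neg_inv_smul_cross {K : Type*} [Field K] {q y : Fin 3 → K} {β : K}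
    (hβ : β ≠ 0) (hq : q ⬝ᵥ q = 1) (hy : q ⬝ᵥ y = 0) (c : K) :
    β • q ⨯₃ (c • q + (-(1 / β)) • q ⨯₃ y) = y := by
  rw [map_add, map_smul, map_smul, cross_self, smul_zero, zero_add,
    cross_cross_self_eq_neg_of_dotProduct_eq_zero hq hy, smul_smul, mul_neg, mul_one_div_cancel hβ,
    neg_smul, one_smul, neg_neg]

lemma dotProduct_closedLoop_eq_zero (kq kw : R) {q ω : Fin 3 → R} (qd ωd ωd' : Fin 3 → R)
    (hqω : q ⬝ᵥ ω = 0) :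
    q ⬝ᵥ ((-kq) • qd ⨯₃ q - kw • (ω + q ⨯₃ (q ⨯₃ ωd)) - (q ⬝ᵥ ωd) • ω ⨯₃ q
      - q ⨯₃ (q ⨯₃ ωd')) = 0 := by
  simp only [dotProduct_sub, dotProduct_add, dotProduct_smul, dot_self_cross, dot_cross_self, hqω,
    smul_zero, add_zero, sub_zero]

end CrossProduct

theorem closed_loop_link_dynamics_general (q ω qd ωd : ℝ → V3)
    (hqu : ∀ t, norm3 (q t) = 1)
    (hqω : ∀ t, dot3 (q t) (ω t) = 0)
    (hkin : ∀ t, deriv q t = cross3 (ω t) (q t))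
    (α β kq kw : ℝ) (hβ : β ≠ 0)
    (upar uperp u : ℝ → V3)
    (hupar : ∀ t, ∃ c : ℝ, upar t = c • q t)
    (huperp : ∀ t, uperp t =
      (-(1 / β)) • cross3 (q t)
        ((-kq) • cross3 (qd t) (q t)
          - kw • (ω t + cross3 (q t) (cross3 (q t) (ωd t)))
          - dot3 (q t) (ωd t) • deriv q t
          - cross3 (q t) (cross3 (q t) (deriv ωd t))
          - α • cross3 (q t) e3))
    (hu : ∀ t, u t = upar t + uperp t)
    (hode : ∀ t, deriv ω t = α • cross3 (q t) e3 + β • cross3 (q t) (u t)) :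
    ∀ t : ℝ, deriv ω t =
      (-kq) • cross3 (qd t) (q t)
        - kw • (ω t + cross3 (q t) (cross3 (q t) (ωd t)))
        - dot3 (q t) (ωd t) • deriv q t
        - cross3 (q t) (cross3 (q t) (deriv ωd t)) := by
  intro t
  obtain ⟨c, hc⟩ := hupar t
  simp only [cross3_eq_crossProduct, dot3_eq_dotProduct] at *
  have hq : q t ⬝ᵥ q t = 1 := dot3_self_eq_one_of_norm3_eq_one (hqu t)
  have hy : q t ⬝ᵥ ((-kq) • qd t ⨯₃ q t - kw • (ω t + q t ⨯₃ (q t ⨯₃ ωd t))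
      - (q t ⬝ᵥ ωd t) • deriv q t - q t ⨯₃ (q t ⨯₃ deriv ωd t) - α • q t ⨯₃ e3) = 0 := by
    rw [dotProduct_sub, hkin t, dotProduct_closedLoop_eq_zero _ _ _ _ _ (hqω t), dotProduct_smul,
      dot_self_cross, smul_zero, sub_zero]
  rw [hode t, hu t, hc, huperp t, smul_cross_add_neg_inv_smul_cross hβ hq hy]
  abel

/-- substituting the transverse control
`u⊥ = −(1/β) q̂ {−k_q e_q − k_ω e_ω − (q·ω_d) q̇ − q̂² ω̇_d − α q̂ e₃}` (plus any
component parallel to `q`) into the link dynamics `ω̇ = α q × e₃ + β q × u`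
yields `ω̇ = −k_q e_q − k_ω e_ω − (q·ω_d) q̇ − q̂² ω̇_d`. -/
theorem closed_loop_link_dynamics (q ω qd ωd : ℝ → V3)
    (hq : Differentiable ℝ q) (hω : Differentiable ℝ ω)
    (hqd : Differentiable ℝ qd) (hωd : Differentiable ℝ ωd)
    (hqu : ∀ t, norm3 (q t) = 1) (hqdu : ∀ t, norm3 (qd t) = 1)
    (hqω : ∀ t, dot3 (q t) (ω t) = 0) (hqdωd : ∀ t, dot3 (qd t) (ωd t) = 0)
    (hkin : ∀ t, deriv q t = cross3 (ω t) (q t))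
    (hkind : ∀ t, deriv qd t = cross3 (ωd t) (qd t))
    (α β kq kw : ℝ) (hβ : β ≠ 0) (hkq : 0 < kq) (hkw : 0 < kw)
    (upar uperp u : ℝ → V3)
    (hupar : ∀ t, ∃ c : ℝ, upar t = c • q t)
    (huperp : ∀ t, uperp t =
      (-(1 / β)) • cross3 (q t)
        ((-kq) • cross3 (qd t) (q t)
          - kw • (ω t + cross3 (q t) (cross3 (q t) (ωd t)))
          - dot3 (q t) (ωd t) • deriv q t
          - cross3 (q t) (cross3 (q t) (deriv ωd t))
          - α • cross3 (q t) e3))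
    (hu : ∀ t, u t = upar t + uperp t)
    (hode : ∀ t, deriv ω t = α • cross3 (q t) e3 + β • cross3 (q t) (u t)) :
    ∀ t : ℝ, deriv ω t =
      (-kq) • cross3 (qd t) (q t)
        - kw • (ω t + cross3 (q t) (cross3 (q t) (ωd t)))
        - dot3 (q t) (ωd t) • deriv q t
        - cross3 (q t) (cross3 (q t) (deriv ωd t)) :=
  closed_loop_link_dynamics_general q ω qd ωd hqu hqω hkin α β kq kw hβ upar uperp u hupar huperp hu
    hode
end
end

section
/- Fix n ≥ 1, positive reals m, m₁,…,m_n (quadrotor mass and link masses) and l₁,…,l_n (link lengths). Define M_{ii} = (m + m_i/3) l_i² + Σ_{p=i+1}^n m_p l_i² for 1 ≤ i ≤ n and M_{ij} = M_{ji} = (m + m_i/2) l_i l_j + Σ_{p=i+1}^n m_p l_i l_j for 1 ≤ j < i ≤ n. Then for any vectors v₁,…,v_n ∈ ℝ³, setting w₀ = 0 and w_i = Σ_{j=1}^i l_j v_j, the identity Σ_{i=1}^n [ (1/2) m_i ‖w_{i−1}‖² + (1/2) m_i l_i (w_{i−1}·v_i) + (1/6) m_i l_i² ‖v_i‖² ]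 + (1/2) m ‖w_n‖² = (1/2) Σ_{i=1}^n Σ_{j=1}^n M_{ij} (v_i·v_j) holds. -/
noncomputable section

open scoped BigOperators

/-- The inertia constants `M_{ij}` of the tethered quadrotor:
`M_{ii} = (m + mᵢ/3) lᵢ² + Σ_{p>i} m_p lᵢ²` and, for `i ≠ j`,
`M_{ij} = M_{ji} = (m + m_{max(i,j)}/2) lᵢ lⱼ + Σ_{p>max(i,j)} m_p lᵢ lⱼ`. -/
def inertiaM (n : ℕ) (m : ℝ) (mi l : Fin n → ℝ) (i j : Fin n) : ℝ :=
  if i = j then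
    (m + mi i / 3) * l i ^ 2 + (∑ p ∈ Finset.univ.filter (fun p => i < p), mi p) * l i ^ 2
  else
    (m + mi (max i j) / 2) * l i * l j
      + (∑ p ∈ Finset.univ.filter (fun p => max i j < p), mi p) * l i * l j

lemma dot3_sum_smul_left {ι : Type*} (s : Finset ι) (a : ι → ℝ) (v : ι → V3) (w : V3) :
    dot3 (∑ j ∈ s, a j • v j) w = ∑ j ∈ s, a j * dot3 (v j) w := by
  simp only [dot3, ← dotProduct.eq_def, sum_dotProduct, smul_dotProduct, smul_eq_mul]

lemma dot3_sum_smul_sum_smul {ι : Type*} (s t : Finset ι) (a b : ι → ℝ) (v : ι → V3) :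
    dot3 (∑ j ∈ s, a j • v j) (∑ k ∈ t, b k • v k)
      = ∑ j ∈ s, ∑ k ∈ t, a j * b k * dot3 (v j) (v k) := by
  rw [dot3_sum_smul_left]
  refine Finset.sum_congr rfl fun j _ => ?_
  rw [dot3_comm, dot3_sum_smul_left, Finset.mul_sum]
  exact Finset.sum_congr rfl fun k _ => by rw [dot3_comm]; ring

lemma sum_sum_mul_eq_sum_sum_symmPart_mul {ι : Type*} [Fintype ι] (C G : ι → ι → ℝ)
    (hG : ∀ j k, G j k = G k j) :
    ∑ j, ∑ k, C j k * G j k = ∑ j, ∑ k, (C j k + C k j) / 2 * G j k := by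
  have hswap : ∑ j, ∑ k, C k j * G j k = ∑ j, ∑ k, C j k * G j k := by
    rw [Finset.sum_comm]
    simp only [hG]
  simp only [add_div, add_mul, Finset.sum_add_distrib, div_mul_eq_mul_div, ← Finset.sum_div,
    hswap]
  ring

lemma half_mass_mul_norm3_sq_sum {ι : Type*} [Fintype ι] (m : ℝ) (l : ι → ℝ) (v : ι → V3) :
    (1 / 2) * m * norm3 (∑ j, l j • v j) ^ 2
      = ∑ j, ∑ k, m / 2 * (l j * l k) * dot3 (v j) (v k) := by
  simp only [norm3_sq, dot3_sum_smul_sum_smul, Finset.mul_sum]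
  exact Finset.sum_congr rfl fun j _ => Finset.sum_congr rfl fun k _ => by ring

section KineticEnergy

variable {ι : Type*} [Fintype ι] [LinearOrder ι]

lemma sum_filter_lt_sum_filter_lt (f : ι → ι → ℝ) (i : ι) :
    ∑ j ∈ Finset.univ.filter (fun j => j < i), ∑ k ∈ Finset.univ.filter (fun k => k < i), f j k
      = ∑ j, ∑ k, if max j k < i then f j k else 0 := by
  simp only [Finset.sum_filter, max_lt_iff, ite_and]
  refine Finset.sum_congr rfl fun j _ => ?_
  split_ifs <;> simp

lemma sum_half_mass_mul_norm3_sq_sum_lt (mi l : ι → ℝ) (v : ι → V3) :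
    ∑ i, (1 / 2) * mi i * norm3 (∑ j ∈ Finset.univ.filter (fun j => j < i), l j • v j) ^ 2
      = ∑ j, ∑ k, (∑ p ∈ Finset.univ.filter (fun p => max j k < p), mi p) / 2
          * (l j * l k) * dot3 (v j) (v k) := by
  simp only [norm3_sq, dot3_sum_smul_sum_smul, sum_filter_lt_sum_filter_lt]
  simp only [Finset.mul_sum, mul_ite, mul_zero, Finset.sum_filter, Finset.sum_div, Finset.sum_mul]
  rw [Finset.sum_comm]
  refine Finset.sum_congr rfl fun j _ => ?_
  rw [Finset.sum_comm]
  refine Finset.sum_congr rfl fun k _ => Finset.sum_congr rfl fun p _ => ?_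
  split_ifs <;> ring

lemma sum_half_mass_mul_dot3_sum_lt (mi l : ι → ℝ) (v : ι → V3) :
    ∑ i, (1 / 2) * mi i * l i * dot3 (∑ j ∈ Finset.univ.filter (fun j => j < i), l j • v j) (v i)
      = ∑ j, ∑ k, (if j < k then mi k / 2 else 0) * (l j * l k) * dot3 (v j) (v k) := by
  simp only [dot3_sum_smul_left, Finset.mul_sum]
  simp only [Finset.sum_filter, ite_mul, zero_mul]
  rw [Finset.sum_comm]
  refine Finset.sum_congr rfl fun j _ => Finset.sum_congr rfl fun k _ => ?_
  split_ifs <;> ring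

lemma sum_sixth_mass_mul_norm3_sq (mi l : ι → ℝ) (v : ι → V3) :
    ∑ i, (1 / 6) * mi i * l i ^ 2 * norm3 (v i) ^ 2
      = ∑ j, ∑ k, (if j = k then mi j / 6 else 0) * (l j * l k) * dot3 (v j) (v k) := by
  simp only [ite_mul, zero_mul, Finset.sum_ite_eq, Finset.mem_univ, if_true, norm3_sq]
  exact Finset.sum_congr rfl fun i _ => by ring

/-- The link-`k` cross term `(1/2) mₖ lₖ (wₖ₋₁ · vₖ)` is charged to the pairs `j < k` only, so
this coefficient of `vⱼ · vₖ` is not symmetric. -/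
def kineticCoeff (m : ℝ) (mi l : ι → ℝ) (j k : ι) : ℝ :=
  ((∑ p ∈ Finset.univ.filter (fun p => max j k < p), mi p) / 2 + (if j < k then mi k / 2 else 0)
    + (if j = k then mi j / 6 else 0) + m / 2) * (l j * l k)

lemma kineticEnergy_eq_sum_kineticCoeff_mul_dot3 (m : ℝ) (mi l : ι → ℝ) (v : ι → V3) :
    (∑ i,
      ((1 / 2) * mi i * norm3 (∑ j ∈ Finset.univ.filter (fun j => j < i), l j • v j) ^ 2
        + (1 / 2) * mi i * l i
            * dot3 (∑ j ∈ Finset.univ.filter (fun j => j < i), l j • v j) (v i)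
        + (1 / 6) * mi i * l i ^ 2 * norm3 (v i) ^ 2))
      + (1 / 2) * m * norm3 (∑ j, l j • v j) ^ 2
    = ∑ j, ∑ k, kineticCoeff m mi l j k * dot3 (v j) (v k) := by
  rw [Finset.sum_add_distrib, Finset.sum_add_distrib, sum_half_mass_mul_norm3_sq_sum_lt,
    sum_half_mass_mul_dot3_sum_lt, sum_sixth_mass_mul_norm3_sq, half_mass_mul_norm3_sq_sum]
  simp only [← Finset.sum_add_distrib]
  refine Finset.sum_congr rfl fun j _ => Finset.sum_congr rfl fun k _ => ?_
  rw [kineticCoeff]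
  ring

end KineticEnergy

lemma inertiaM_eq_kineticCoeff_add_kineticCoeff (n : ℕ) (m : ℝ) (mi l : Fin n → ℝ) (j k : Fin n) :
    inertiaM n m mi l j k = kineticCoeff m mi l j k + kineticCoeff m mi l k j := by
  rcases lt_trichotomy j k with h | rfl | h
  · rw [inertiaM, kineticCoeff, kineticCoeff, if_neg h.ne, if_pos h, if_neg h.not_gt,
      if_neg h.ne, if_neg h.ne', max_comm k j, max_eq_right h.le]
    ring
  · simp only [inertiaM, kineticCoeff, lt_irrefl, max_self, if_true, if_false]
    ring
  · rw [inertiaM, kineticCoeff, kineticCoeff, if_neg h.ne', if_neg h.not_gt, if_pos h,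
      if_neg h.ne', if_neg h.ne, max_comm k j, max_eq_left h.le]
    ring

theorem kinetic_energy_identity_general (n : ℕ)
    (m : ℝ) (mi l : Fin n → ℝ)
    (v : Fin n → V3) :
    (∑ i : Fin n,
      ((1 / 2) * mi i * norm3 (∑ j ∈ Finset.univ.filter (fun j => j < i), l j • v j) ^ 2
        + (1 / 2) * mi i * l i
            * dot3 (∑ j ∈ Finset.univ.filter (fun j => j < i), l j • v j) (v i)
        + (1 / 6) * mi i * l i ^ 2 * norm3 (v i) ^ 2))
      + (1 / 2) * m * norm3 (∑ j : Fin n, l j • v j) ^ 2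
    = (1 / 2) * ∑ i : Fin n, ∑ j : Fin n, inertiaM n m mi l i j * dot3 (v i) (v j) := by
  rw [kineticEnergy_eq_sum_kineticCoeff_mul_dot3,
    sum_sum_mul_eq_sum_sum_symmPart_mul _ _ fun j k => dot3_comm (v j) (v k)]
  simp only [inertiaM_eq_kineticCoeff_add_kineticCoeff, Finset.mul_sum]
  refine Finset.sum_congr rfl fun j _ => Finset.sum_congr rfl fun k _ => ?_
  ring

/-- the total kinetic energy of the tether links and the
quadrotor's translational kinetic energy equal the quadratic form
`(1/2) Σᵢ Σⱼ M_{ij} (vᵢ·vⱼ)`, where `vᵢ` plays the role of `q̇ᵢ` and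
`w_i = Σ_{j≤i} lⱼ vⱼ` that of `ẋᵢ`. -/
theorem kinetic_energy_identity (n : ℕ) (hn : 1 ≤ n)
    (m : ℝ) (mi l : Fin n → ℝ)
    (hm : 0 < m) (hmi : ∀ i, 0 < mi i) (hl : ∀ i, 0 < l i)
    (v : Fin n → V3) :
    (∑ i : Fin n,
      ((1 / 2) * mi i * norm3 (∑ j ∈ Finset.univ.filter (fun j => j < i), l j • v j) ^ 2
        + (1 / 2) * mi i * l i
            * dot3 (∑ j ∈ Finset.univ.filter (fun j => j < i), l j • v j) (v i)
        + (1 / 6) * mi i * l i ^ 2 * norm3 (v i) ^ 2))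
      + (1 / 2) * m * norm3 (∑ j : Fin n, l j • v j) ^ 2
    = (1 / 2) * ∑ i : Fin n, ∑ j : Fin n, inertiaM n m mi l i j * dot3 (v i) (v j) :=
  kinetic_energy_identity_general n m mi l v
end
end

section
/- Fix n ≥ 1 and the inertia constants M_{ij} defined from masses m, m₁,…,m_n and lengths l₁,…,l_n by M_{ii} = (m + m_i/3) l_i² + Σ_{p=i+1}^n m_p l_i² and M_{ij} = M_{ji} = (m + m_i/2) l_i l_j + Σ_{p=i+1}^n m_p l_i l_j for j < i. Given unit vectors q₁,…,q_n ∈ ℝ³, let 𝓜(q) be the 3n×3n block matrix whose (i,i) block is M_{ii} I₃ and whose (i,j) block for i ≠ j is −q̂_i² M_{ij}, assume 𝓜(q) is invertible, let M^I_{ij}(q) ∈ ℝ^{3×3} denote the (i,j) block of 𝓜(q)^{−1}, and define 𝓑(q) = Σ_{i=1}^n Σ_{j=1}^n M^I_{ij}(q) l_i l_j q̂_j². If all link directions coincide, i.e., q_i = q for all i and some unit vector q ∈ ℝ³, then 𝓑(q) q = 0; in particular 𝓑(q) is not invertible when the tether is taut. -/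
noncomputable section

open scoped BigOperators

open Matrix

/-- The hat map: `hat3 v` is the skew-symmetric matrix with `hat3 v *ᵥ w = v × w`. -/
def hat3 (v : V3) : Matrix (Fin 3) (Fin 3) ℝ :=
  !![0, -v 2, v 1; v 2, 0, -v 0; -v 1, v 0, 0]

/-- The `3n × 3n` block inertia matrix `𝓜(q)`: the `(i,i)` block is `M_{ii} I₃`
and the `(i,j)` block for `i ≠ j` is `−q̂ᵢ² M_{ij}`. -/
def bigM (n : ℕ) (m : ℝ) (mi l : Fin n → ℝ) (qv : Fin n → V3) :
    Matrix (Fin n × Fin 3) (Fin n × Fin 3) ℝ :=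
  Matrix.of fun p r =>
    if p.1 = r.1 then (if p.2 = r.2 then inertiaM n m mi l p.1 p.1 else 0)
    else -(inertiaM n m mi l p.1 r.1) * ((hat3 (qv p.1) * hat3 (qv p.1)) p.2 r.2)

/-- The input matrix `𝓑(q) = Σᵢ Σⱼ M^I_{ij}(q) lᵢ lⱼ q̂ⱼ²`, where `M^I_{ij}(q)`
is the `(i,j)` block of `𝓜(q)⁻¹`. -/
def bigB (n : ℕ) (m : ℝ) (mi l : Fin n → ℝ) (qv : Fin n → V3) :
    Matrix (Fin 3) (Fin 3) ℝ :=
  ∑ i : Fin n, ∑ j : Fin n, (l i * l j) •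
    ((Matrix.of fun a b => (bigM n m mi l qv)⁻¹ (i, a) (j, b))
      * (hat3 (qv j) * hat3 (qv j)))

theorem hat3_mulVec_self (v : V3) : hat3 v *ᵥ v = 0 := by
  ext k
  fin_cases k <;> simp [hat3, mulVec, dotProduct, Fin.sum_univ_three] <;> ring

theorem ne_zero_of_norm3_eq_one {v : V3} (hv : norm3 v = 1) : v ≠ 0 := by
  rintro rfl
  simp [norm3, dot3] at hv

theorem Matrix.not_isUnit_of_mulVec_eq_zero {ι R : Type*} [Fintype ι] [DecidableEq ι]
    [CommRing R] {A : Matrix ι ι R} {v : ι → R} (hv : v ≠ 0) (hAv : A *ᵥ v = 0) :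
    ¬IsUnit A := fun hA =>
  hv <| mulVec_injective_of_isUnit hA (hAv.trans (mulVec_zero A).symm)

/-- Each summand of `𝓑(q)` ends in `q̂ⱼ² = q̂²`, and `q̂ q = q × q = 0`. -/
theorem bigB_mulVec_eq_zero_of_forall_eq {n : ℕ} {m : ℝ} {mi l : Fin n → ℝ}
    {qv : Fin n → V3} {q : V3} (htaut : ∀ i, qv i = q) :
    bigB n m mi l qv *ᵥ q = 0 := by
  simp only [bigB, sum_mulVec, smul_mulVec, ← mulVec_mulVec, htaut, hat3_mulVec_self,
    mulVec_zero, smul_zero, Finset.sum_const_zero]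

theorem bigB_singular_when_taut_general (n : ℕ) (hn : 1 ≤ n)
    (m : ℝ) (mi l : Fin n → ℝ) (qv : Fin n → V3) (q : V3)
    (hunit : ∀ i, norm3 (qv i) = 1)
    (htaut : ∀ i, qv i = q) :
    (bigB n m mi l qv) *ᵥ q = 0 ∧ ¬ IsUnit (bigB n m mi l qv) := by
  have hBq := bigB_mulVec_eq_zero_of_forall_eq (m := m) (mi := mi) (l := l) htaut
  have hq : q ≠ 0 := htaut ⟨0, hn⟩ ▸ ne_zero_of_norm3_eq_one (hunit ⟨0, hn⟩)
  exact ⟨hBq, not_isUnit_of_mulVec_eq_zero hq hBq⟩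

/-- if all the link directions coincide (the tether is taut),
then the input matrix `𝓑(q)` annihilates the common direction `q`; in
particular it is not invertible. -/
theorem bigB_singular_when_taut (n : ℕ) (hn : 1 ≤ n)
    (m : ℝ) (mi l : Fin n → ℝ) (qv : Fin n → V3) (q : V3)
    (hunit : ∀ i, norm3 (qv i) = 1)
    (hM : IsUnit (bigM n m mi l qv))
    (htaut : ∀ i, qv i = q) :
    (bigB n m mi l qv) *ᵥ q = 0 ∧ ¬ IsUnit (bigB n m mi l qv) :=
  bigB_singular_when_taut_general n hn m mi l qv q hunit htaut
end
end

section
/- (Proposition 3) Let L > 0, k_x, k_ẋ > 0, and let y_d : [0,∞) → ℝ³ be a twice differentiable desired trajectory with ‖y_d(t)‖ ≤ r for all t ≥ 0, for some r < L. Let x : [0,∞) → ℝ³ be twice differentiable, set e_x = x − y_d, and suppose the closed-loop (feedback-linearized) error dynamics ë_x(t) = −k_x e_x(t) − k_ẋ ė_x(t) holds for all t ≥ 0 and that x(0) = y_d(0) (so e_x(0) = 0). If the gain k_x satisfies ‖ė_x(0)‖/√k_x < L − r, then (i) ‖x(t)‖ < L for all t ≥ 0, i.e., x(t) remains in the domain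 D_x = { x ∈ ℝ³ : ‖x‖ < L }; and (ii) (e_x, ė_x) = (0,0) is exponentially stable: there exist C, γ > 0 with ‖e_x(t)‖ + ‖ė_x(t)‖ ≤ C e^{−γ t}(‖e_x(0)‖ + ‖ė_x(0)‖) for all t ≥ 0. -/
/-!
Along the error dynamics `ë + k_ẋ ė + k_x e = 0` the energy `k_x ‖e‖² + ‖ė‖²` is nonincreasing,
so `e(0) = 0` gives `‖e(t)‖ ≤ ‖ė(0)‖ / √k_x < L - r`, hence `‖x(t)‖ ≤ ‖e(t)‖ + ‖y_d(t)‖ < L`.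
Adding a small cross term `ε ⟪e, ė⟫` to the energy gives a Lyapunov function `W`, comparable to
the energy, with `Ẇ ≤ -(ε/3) W`; this yields exponential decay of `(e, ė)`.
-/

noncomputable section

open scoped BigOperators

open Set Real
open scoped InnerProductSpace

theorem antitoneOn_Ici_of_hasDerivAt_nonpos {f f' : ℝ → ℝ} {a : ℝ}
    (hf : ∀ t ∈ Ici a, HasDerivAt f (f' t) t) (hf' : ∀ t ∈ Ioi a, f' t ≤ 0) :
    AntitoneOn f (Ici a) := by
  refine antitoneOn_of_hasDerivWithinAt_nonpos (f' := f') (convex_Ici a)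
    (fun t ht => (hf t ht).continuousAt.continuousWithinAt) ?_ ?_
  · rw [interior_Ici]
    exact fun t ht => (hf t (mem_Ici_of_Ioi ht)).hasDerivWithinAt
  · rwa [interior_Ici]

theorem le_mul_exp_of_hasDerivAt_le_neg_mul {f f' : ℝ → ℝ} {γ : ℝ}
    (hf : ∀ t, 0 ≤ t → HasDerivAt f (f' t) t) (hf' : ∀ t, 0 ≤ t → f' t ≤ -γ * f t)
    {t : ℝ} (ht : 0 ≤ t) : f t ≤ f 0 * exp (-γ * t) := by
  have hg : ∀ s ∈ Ici (0 : ℝ), HasDerivAt (fun s => f s * exp (γ * s))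
      ((f' s + γ * f s) * exp (γ * s)) s := fun s hs => by
    have hexp : HasDerivAt (fun s => exp (γ * s)) (exp (γ * s) * γ) s := by
      simpa using ((hasDerivAt_id s).const_mul γ).exp
    exact ((hf s hs).fun_mul hexp).congr_deriv (by ring)
  have hanti := antitoneOn_Ici_of_hasDerivAt_nonpos hg fun s hs =>
    mul_nonpos_of_nonpos_of_nonneg (by linarith [hf' s (le_of_lt hs)]) (exp_pos _).le
  have h := hanti self_mem_Ici ht ht
  simp only [mul_zero, exp_zero, mul_one] at h
  calc f t = f t * exp (γ * t) * exp (-γ * t) := by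
        rw [mul_assoc, ← exp_add]; simp
    _ ≤ f 0 * exp (-γ * t) := mul_le_mul_of_nonneg_right h (exp_pos _).le

section DampedOscillator

variable {E : Type*} [NormedAddCommGroup E]

def oscillatorEnergy (k : ℝ) (u v : E) : ℝ := k * ‖u‖ ^ 2 + ‖v‖ ^ 2

variable {k c ε : ℝ}

theorem min_mul_sq_norm_add_le_oscillatorEnergy (hk : 0 ≤ k) (u v : E) :
    min k 1 * (‖u‖ + ‖v‖) ^ 2 ≤ 2 * oscillatorEnergy k u v := by
  have hm : 0 ≤ min k 1 := le_min hk zero_le_one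
  unfold oscillatorEnergy
  nlinarith [mul_le_mul_of_nonneg_right (min_le_left k 1) (sq_nonneg ‖u‖),
    mul_le_mul_of_nonneg_right (min_le_right k 1) (sq_nonneg ‖v‖),
    mul_nonneg hm (sq_nonneg (‖u‖ - ‖v‖))]

theorem oscillatorEnergy_le_max_mul_sq_norm_add (u v : E) :
    oscillatorEnergy k u v ≤ max k 1 * (‖u‖ + ‖v‖) ^ 2 := by
  have hM : 1 ≤ max k 1 := le_max_right k 1
  unfold oscillatorEnergy
  nlinarith [mul_le_mul_of_nonneg_right (le_max_left k 1) (sq_nonneg ‖u‖),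
    mul_le_mul_of_nonneg_right hM (sq_nonneg ‖v‖),
    mul_nonneg (zero_le_one.trans hM) (mul_nonneg (norm_nonneg u) (norm_nonneg v))]

variable [InnerProductSpace ℝ E]

structure IsDampedOscillator (k c : ℝ) (e e' : ℝ → E) : Prop where
  hasDerivAt : ∀ t, 0 ≤ t → HasDerivAt e (e' t) t
  hasDerivAt_deriv : ∀ t, 0 ≤ t → HasDerivAt e' (-(k • e t + c • e' t)) t

def oscillatorLyapunov (k ε : ℝ) (u v : E) : ℝ := oscillatorEnergy k u v + ε * ⟪u, v⟫_ℝ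

theorem mul_abs_inner_le_half_oscillatorEnergy (hk : 0 ≤ k) (hε : 0 ≤ ε) (hεk : ε ≤ √k)
    (u v : E) : ε * |⟪u, v⟫_ℝ| ≤ oscillatorEnergy k u v / 2 := by
  have hsq : √k ^ 2 = k := sq_sqrt hk
  have hcs : |⟪u, v⟫_ℝ| ≤ ‖u‖ * ‖v‖ := abs_real_inner_le_norm u v
  have huv : 0 ≤ ‖u‖ * ‖v‖ := by positivity
  unfold oscillatorEnergy
  nlinarith [mul_le_mul_of_nonneg_left hcs hε, mul_le_mul_of_nonneg_right hεk huv,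
    sq_nonneg (√k * ‖u‖ - ‖v‖)]

theorem half_oscillatorEnergy_le_oscillatorLyapunov (hk : 0 ≤ k) (hε : 0 ≤ ε) (hεk : ε ≤ √k)
    (u v : E) : oscillatorEnergy k u v / 2 ≤ oscillatorLyapunov k ε u v := by
  have := mul_abs_inner_le_half_oscillatorEnergy hk hε hεk u v
  have := neg_abs_le ⟪u, v⟫_ℝ
  unfold oscillatorLyapunov
  nlinarith

theorem oscillatorLyapunov_le_three_halves_mul (hk : 0 ≤ k) (hε : 0 ≤ ε) (hεk : ε ≤ √k)
    (u v : E) : oscillatorLyapunov k ε u v ≤ 3 / 2 * oscillatorEnergy k u v := by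
  have := mul_abs_inner_le_half_oscillatorEnergy hk hε hεk u v
  have := le_abs_self ⟪u, v⟫_ℝ
  unfold oscillatorLyapunov
  nlinarith

theorem oscillatorLyapunov_deriv_le (hε : 0 ≤ ε) (hεc : ε ≤ c) (hεck : ε * c ≤ k) (u v : E) :
    -2 * c * ‖v‖ ^ 2 + ε * (‖v‖ ^ 2 - k * ‖u‖ ^ 2 - c * ⟪u, v⟫_ℝ)
      ≤ -(ε / 2) * oscillatorEnergy k u v := by
  have hcs : -(‖u‖ * ‖v‖) ≤ ⟪u, v⟫_ℝ := neg_le_of_abs_le (abs_real_inner_le_norm u v)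
  have hc : 0 ≤ c := hε.trans hεc
  unfold oscillatorEnergy
  -- AM-GM in the form `2 ε c ‖u‖ ‖v‖ ≤ c ‖v‖² + ε k ‖u‖²`, valid because `ε c ≤ k`
  nlinarith [mul_le_mul_of_nonneg_left hcs (mul_nonneg hε hc),
    mul_nonneg hc (sq_nonneg (‖v‖ - ε * ‖u‖)),
    mul_nonneg (sub_nonneg.2 hεck) (mul_nonneg hε (sq_nonneg ‖u‖)),
    mul_nonneg (sub_nonneg.2 hεc) (sq_nonneg ‖v‖)]

namespace IsDampedOscillator

variable {e e' : ℝ → E}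

theorem hasDerivAt_oscillatorEnergy (h : IsDampedOscillator k c e e') {t : ℝ} (ht : 0 ≤ t) :
    HasDerivAt (fun s => oscillatorEnergy k (e s) (e' s)) (-2 * c * ‖e' t‖ ^ 2) t := by
  refine (((h.hasDerivAt t ht).norm_sq.const_mul k).add
    (h.hasDerivAt_deriv t ht).norm_sq).congr_deriv ?_
  simp only [inner_neg_right, inner_add_right, inner_smul_right, real_inner_comm (e t),
    real_inner_self_eq_norm_sq]
  ring

theorem hasDerivAt_oscillatorLyapunov (h : IsDampedOscillator k c e e') (ε : ℝ) {t : ℝ}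
    (ht : 0 ≤ t) :
    HasDerivAt (fun s => oscillatorLyapunov k ε (e s) (e' s))
      (-2 * c * ‖e' t‖ ^ 2 + ε * (‖e' t‖ ^ 2 - k * ‖e t‖ ^ 2 - c * ⟪e t, e' t⟫_ℝ)) t := by
  refine ((h.hasDerivAt_oscillatorEnergy ht).add
    (((h.hasDerivAt t ht).inner ℝ (h.hasDerivAt_deriv t ht)).const_mul ε)).congr_deriv ?_
  simp only [inner_neg_right, inner_add_right, inner_smul_right, real_inner_self_eq_norm_sq]
  ring

theorem oscillatorEnergy_le (h : IsDampedOscillator k c e e') (hc : 0 ≤ c) {t : ℝ}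
    (ht : 0 ≤ t) :
    oscillatorEnergy k (e t) (e' t) ≤ oscillatorEnergy k (e 0) (e' 0) :=
  antitoneOn_Ici_of_hasDerivAt_nonpos (fun s hs => h.hasDerivAt_oscillatorEnergy hs)
    (fun s _ => by nlinarith [sq_nonneg ‖e' s‖]) self_mem_Ici ht ht

theorem norm_le_of_eq_zero (h : IsDampedOscillator k c e e') (hk : 0 < k) (hc : 0 ≤ c)
    (h0 : e 0 = 0) {t : ℝ} (ht : 0 ≤ t) :
    ‖e t‖ ≤ ‖e' 0‖ / √k := by
  have hE := h.oscillatorEnergy_le hc ht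
  simp only [oscillatorEnergy, h0, norm_zero] at hE
  rw [le_div_iff₀ (sqrt_pos.2 hk), ← sqrt_sq (norm_nonneg (e' 0))]
  refine le_sqrt_of_sq_le ?_
  rw [mul_pow, sq_sqrt hk.le]
  nlinarith [sq_nonneg ‖e' t‖]

theorem exists_oscillatorEnergy_le_exp (h : IsDampedOscillator k c e e') (hk : 0 < k)
    (hc : 0 < c) : ∃ γ > 0, ∀ t, 0 ≤ t →
      oscillatorEnergy k (e t) (e' t) ≤ 3 * oscillatorEnergy k (e 0) (e' 0) * exp (-γ * t) := by
  set ε := min (min c (k / c)) √k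
  have hε : 0 < ε := lt_min (lt_min hc (div_pos hk hc)) (sqrt_pos.2 hk)
  have hεc : ε ≤ c := (min_le_left _ _).trans (min_le_left _ _)
  have hεck : ε * c ≤ k := (le_div_iff₀ hc).1 ((min_le_left _ _).trans (min_le_right _ _))
  have hεk : ε ≤ √k := min_le_right _ _
  have hW_decay : ∀ t, 0 ≤ t → oscillatorLyapunov k ε (e t) (e' t)
      ≤ oscillatorLyapunov k ε (e 0) (e' 0) * exp (-(ε / 3) * t) := by
    refine fun t ht => le_mul_exp_of_hasDerivAt_le_neg_mul
      (fun s hs => h.hasDerivAt_oscillatorLyapunov ε hs) (fun s _ => ?_) ht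
    have hWE := mul_le_mul_of_nonneg_left
      (oscillatorLyapunov_le_three_halves_mul hk.le hε.le hεk (e s) (e' s))
      (by positivity : 0 ≤ ε / 3)
    linarith [oscillatorLyapunov_deriv_le hε.le hεc hεck (e s) (e' s)]
  refine ⟨ε / 3, by positivity, fun t ht => ?_⟩
  calc oscillatorEnergy k (e t) (e' t)
      ≤ 2 * oscillatorLyapunov k ε (e t) (e' t) := by
        linarith [half_oscillatorEnergy_le_oscillatorLyapunov hk.le hε.le hεk (e t) (e' t)]
    _ ≤ 2 * (oscillatorLyapunov k ε (e 0) (e' 0) * exp (-(ε / 3) * t)) := by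
        gcongr; exact hW_decay t ht
    _ ≤ 2 * (3 / 2 * oscillatorEnergy k (e 0) (e' 0) * exp (-(ε / 3) * t)) := by
        gcongr; exact oscillatorLyapunov_le_three_halves_mul hk.le hε.le hεk _ _
    _ = 3 * oscillatorEnergy k (e 0) (e' 0) * exp (-(ε / 3) * t) := by ring

theorem exists_exp_decay (h : IsDampedOscillator k c e e') (hk : 0 < k) (hc : 0 < c) :
    ∃ C γ : ℝ, 0 < C ∧ 0 < γ ∧ ∀ t, 0 ≤ t →
      ‖e t‖ + ‖e' t‖ ≤ C * exp (-γ * t) * (‖e 0‖ + ‖e' 0‖) := by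
  obtain ⟨γ, hγ, hE⟩ := h.exists_oscillatorEnergy_le_exp hk hc
  have hm : 0 < min k 1 := lt_min hk one_pos
  refine ⟨√(6 * max k 1 / min k 1), γ / 2, sqrt_pos.2 (by positivity), by positivity,
    fun t ht => ?_⟩
  have hsq : (‖e t‖ + ‖e' t‖) ^ 2
      ≤ 6 * max k 1 / min k 1 * exp (-γ * t) * (‖e 0‖ + ‖e' 0‖) ^ 2 :=
    calc (‖e t‖ + ‖e' t‖) ^ 2 ≤ 2 / min k 1 * oscillatorEnergy k (e t) (e' t) := by
          rw [div_mul_eq_mul_div, le_div_iff₀ hm, mul_comm]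
          exact min_mul_sq_norm_add_le_oscillatorEnergy hk.le _ _
      _ ≤ 2 / min k 1 * (3 * oscillatorEnergy k (e 0) (e' 0) * exp (-γ * t)) := by
          gcongr; exact hE t ht
      _ ≤ 2 / min k 1 * (3 * (max k 1 * (‖e 0‖ + ‖e' 0‖) ^ 2) * exp (-γ * t)) := by
          gcongr; exact oscillatorEnergy_le_max_mul_sq_norm_add _ _
      _ = _ := by ring
  calc ‖e t‖ + ‖e' t‖
      ≤ √(6 * max k 1 / min k 1 * exp (-γ * t) * (‖e 0‖ + ‖e' 0‖) ^ 2) := le_sqrt_of_sq_le hsq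
    _ = √(6 * max k 1 / min k 1) * exp (-(γ / 2) * t) * (‖e 0‖ + ‖e' 0‖) := by
        rw [sqrt_mul (by positivity), sqrt_mul (by positivity), sqrt_sq (by positivity),
          ← exp_half]
        ring_nf

end IsDampedOscillator

end DampedOscillator

theorem norm3_eq_norm (a : V3) : norm3 a = ‖(EuclideanSpace.equiv (Fin 3) ℝ).symm a‖ := by
  rw [EuclideanSpace.norm_eq]
  simp [norm3, dot3, sq]

theorem prop3_position_tracking_general (L r kx kx' : ℝ)
    (hkx : 0 < kx) (hkx' : 0 < kx')
    (yd x : ℝ → V3)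
    (hyd : Differentiable ℝ yd) (hyd' : Differentiable ℝ (deriv yd))
    (hx : Differentiable ℝ x) (hx' : Differentiable ℝ (deriv x))
    (hydbound : ∀ t : ℝ, 0 ≤ t → norm3 (yd t) ≤ r)
    (hode : ∀ t : ℝ, 0 ≤ t →
      deriv (deriv (fun s => x s - yd s)) t
        = (-kx) • (x t - yd t) + (-kx') • deriv (fun s => x s - yd s) t)
    (hinit : x 0 = yd 0)
    (hgain : norm3 (deriv (fun s => x s - yd s) 0) / Real.sqrt kx < L - r) :
    (∀ t : ℝ, 0 ≤ t → norm3 (x t) < L) ∧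
    ∃ C γ : ℝ, 0 < C ∧ 0 < γ ∧
      ∀ t : ℝ, 0 ≤ t →
        norm3 (x t - yd t) + norm3 (deriv (fun s => x s - yd s) t)
          ≤ C * Real.exp (-γ * t)
              * (norm3 (x 0 - yd 0) + norm3 (deriv (fun s => x s - yd s) 0)) := by
  set e : ℝ → V3 := fun s => x s - yd s
  have he : Differentiable ℝ e := hx.sub hyd
  have he' : Differentiable ℝ (deriv e) := by
    rw [show deriv e = deriv x - deriv yd from funext fun t => deriv_sub (hx t) (hyd t)]
    exact hx'.sub hyd'
  set T := (EuclideanSpace.equiv (Fin 3) ℝ).symm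
  have hosc : IsDampedOscillator kx kx' (T ∘ e) (T ∘ deriv e) := by
    refine ⟨fun t _ => T.hasFDerivAt.comp_hasDerivAt t (he t).hasDerivAt,
      fun t ht => (T.hasFDerivAt.comp_hasDerivAt t (he' t).hasDerivAt).congr_deriv ?_⟩
    simp only [hode t ht, ContinuousLinearEquiv.coe_coe, map_add, map_smul, map_sub,
      Function.comp_apply, e]
    module
  simp only [norm3_eq_norm] at hydbound hgain ⊢
  refine ⟨fun t ht => ?_, hosc.exists_exp_decay hkx hkx'⟩
  calc ‖T (x t)‖ = ‖T (e t) + T (yd t)‖ := by simp [e]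
    _ ≤ ‖T (e t)‖ + ‖T (yd t)‖ := norm_add_le _ _
    _ < L - r + r := add_lt_add_of_lt_of_le
        ((hosc.norm_le_of_eq_zero hkx hkx'.le (by simp [e, hinit]) ht).trans_lt hgain)
        (hydbound t ht)
    _ = L := by ring

/-- Proposition 3: for the feedback-linearized position tracking
error dynamics `ë_x = −k_x e_x − k_ẋ ė_x` with `x(0) = y_d(0)` and
`‖y_d(t)‖ ≤ r < L`, if the gain satisfies `‖ė_x(0)‖/√k_x < L − r` then the
quadrotor position stays in `D_x = {x : ‖x‖ < L}` for all `t ≥ 0`, and the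
zero equilibrium of `(e_x, ė_x)` is exponentially stable. -/
theorem prop3_position_tracking (L r kx kx' : ℝ)
    (hL : 0 < L) (hr : r < L) (hkx : 0 < kx) (hkx' : 0 < kx')
    (yd x : ℝ → V3)
    (hyd : Differentiable ℝ yd) (hyd' : Differentiable ℝ (deriv yd))
    (hx : Differentiable ℝ x) (hx' : Differentiable ℝ (deriv x))
    (hydbound : ∀ t : ℝ, 0 ≤ t → norm3 (yd t) ≤ r)
    (hode : ∀ t : ℝ, 0 ≤ t →
      deriv (deriv (fun s => x s - yd s)) t
        = (-kx) • (x t - yd t) + (-kx') • deriv (fun s => x s - yd s) t)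
    (hinit : x 0 = yd 0)
    (hgain : norm3 (deriv (fun s => x s - yd s) 0) / Real.sqrt kx < L - r) :
    (∀ t : ℝ, 0 ≤ t → norm3 (x t) < L) ∧
    ∃ C γ : ℝ, 0 < C ∧ 0 < γ ∧
      ∀ t : ℝ, 0 ≤ t →
        norm3 (x t - yd t) + norm3 (deriv (fun s => x s - yd s) t)
          ≤ C * Real.exp (-γ * t)
              * (norm3 (x 0 - yd 0) + norm3 (deriv (fun s => x s - yd s) 0)) :=
  prop3_position_tracking_general L r kx kx' hkx hkx' yd x hyd hyd' hx hx' hydbound hode hinit hgain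
end
end
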